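/- (Abstract form of the Q-operation identity on the four-point integrand, eq. (A.3)) Assume additionally that ⋆ is associative. Then for all A, B, C ∈ V₁: Q(Δ(A ⋆ B) ⋆ C + A ⋆ Δ(B ⋆ C)) = −Δ((QA) ⋆ B) ⋆ C + Δ(A ⋆ (QB)) ⋆ C − Δ(A ⋆ B) ⋆ (QC) + (QA) ⋆ Δ(B ⋆ C) + A ⋆ Δ((QB) ⋆ C) − A ⋆ Δ(B ⋆ (QC)); in particular the terms with collapsed propagators, (A ⋆ B) ⋆ C coming from the first summand and −A ⋆ (B ⋆ C) coming from the second, cancel against each other. -/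
import Mathlib


/-- **Abstract form of the Q-operation identity on the four-point
integrand, eq. (A.3).** Assume additionally that ⋆ is associative. Then for all
odd A, B, C ∈ V₁:
Q(Δ(A ⋆ B) ⋆ C + A ⋆ Δ(B ⋆ C))
  = −Δ((QA) ⋆ B) ⋆ C + Δ(A ⋆ (QB)) ⋆ C − Δ(A ⋆ B) ⋆ (QC)
    + (QA) ⋆ Δ(B ⋆ C) + A ⋆ Δ((QB) ⋆ C) − A ⋆ Δ(B ⋆ (QC));
in particular the collapsed-propagator terms (A ⋆ B) ⋆ C and −A ⋆ (B ⋆ C)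
cancel against each other. -/
theorem Q_on_four_point_integrand {R : Type*} [CommRing R] {V : Type*}
    [AddCommGroup V] [Module R V]
    (V₀ V₁ : Submodule R V) (hVcompl : IsCompl V₀ V₁)
    (st : V →ₗ[R] V →ₗ[R] V)
    (hst00 : ∀ a ∈ V₀, ∀ b ∈ V₀, st a b ∈ V₀)
    (hst01 : ∀ a ∈ V₀, ∀ b ∈ V₁, st a b ∈ V₁)
    (hst10 : ∀ a ∈ V₁, ∀ b ∈ V₀, st a b ∈ V₁)
    (hst11 : ∀ a ∈ V₁, ∀ b ∈ V₁, st a b ∈ V₀)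
    (Q : V →ₗ[R] V)
    (hQ01 : ∀ a ∈ V₀, Q a ∈ V₁) (hQ10 : ∀ a ∈ V₁, Q a ∈ V₀)
    (hQQ : ∀ v, Q (Q v) = 0)
    (hLeib0 : ∀ a ∈ V₀, ∀ b, Q (st a b) = st (Q a) b + st a (Q b))
    (hLeib1 : ∀ a ∈ V₁, ∀ b, Q (st a b) = st (Q a) b - st a (Q b))
    (Δ : V →ₗ[R] V)
    (hΔ01 : ∀ a ∈ V₀, Δ a ∈ V₁) (hΔ10 : ∀ a ∈ V₁, Δ a ∈ V₀)
    (hprop : ∀ v, Q (Δ v) + Δ (Q v) = v)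
    (hassoc : ∀ a b c : V, st (st a b) c = st a (st b c))
    (A B C : V) (hA : A ∈ V₁) (hB : B ∈ V₁) (hC : C ∈ V₁) :
    Q (st (Δ (st A B)) C + st A (Δ (st B C))) =
      -st (Δ (st (Q A) B)) C + st (Δ (st A (Q B))) C - st (Δ (st A B)) (Q C)
        + st (Q A) (Δ (st B C)) + st A (Δ (st (Q B) C)) - st A (Δ (st B (Q C))) := by
  have key : ∀ v, Q (Δ v) = v - Δ (Q v) := fun v => eq_sub_of_add_eq (hprop v)
  rw [map_add, hLeib1 _ (hΔ01 _ (hst11 A hA B hB)) C, hLeib1 A hA,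
      key, key, hLeib1 A hA B, hLeib1 B hB C]
  simp only [map_sub, map_add, LinearMap.sub_apply, LinearMap.add_apply, hassoc]
  abel
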